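/- Let ε > 0, let (f, g) be a pair of ε-potentials, let x ∈ Ω₀, and let 0 < η < 1 be such that (1 − η) u₁(y') ≤ u₁(y) ≤ (1 + η) u₁(y') for all y, y' ∈ S_x. Writing m(x) := (y_m(x) + y_M(x))/2 for the midpoint of S_x, one has |f'(x) − m(x)| ≤ (η/2) |S_x|, and consequently f'(x) − y_m(x) ≥ ((1 − η)/2) |S_x| and y_M(x) − f'(x) ≥ ((1 − η)/2) |S_x| (while trivially f'(x) − y_m(x) ≤ |S_x| and y_M(x) − f'(x) ≤ |S_x|). -/

import Mathlib

/-!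
The second potential equation says that `g y` is the level-`ε` value of
`c ↦ ∫ (x y - f x - c)₊ dμ₀`, a function jointly convex in `(y, c)` and strictly decreasing in `c`
where positive; hence `g` is convex. So `S_x`, a superlevel set of the concave function
`y ↦ x y - f x - g y`, is a compact interval `[y_m, y_M]`, of positive `μ₁`-mass by the first
equation. Now `f'(x)` is the `u₁`-weighted barycentre of `S_x`, and since `∫_{S_x} (y - m) dy = 0`,
`(f'(x) - m) ∫_{S_x} u₁ = ∫_{S_x} (y - m) (u₁ y - u₁ y_m) dy`, where `|y - m| ≤ |S_x| / 2` and
`|u₁ y - u₁ y_m| ≤ η u₁ y`.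
-/

open MeasureTheory Set
open scoped Classical ENNReal

noncomputable section

/-- `μ` is a probability measure supported on `[a,b]` with continuous density `u`
bounded below by `lam` and above by `Lam` on `[a,b]`. -/
def IsGoodMarginal (μ : Measure ℝ) (u : ℝ → ℝ) (a b lam Lam : ℝ) : Prop :=
  IsProbabilityMeasure μ ∧
  μ = (volume.restrict (Icc a b)).withDensity (fun x => ENNReal.ofReal (u x)) ∧
  ContinuousOn u (Icc a b) ∧
  ∀ x ∈ Icc a b, lam ≤ u x ∧ u x ≤ Lam

/-- `(f,g)` is a pair of `ε`-potentials for the quadratically regularized OT problem. -/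
def IsPotentialPair (μ₀ μ₁ : Measure ℝ) (a₀ b₀ a₁ b₁ ε : ℝ) (f g : ℝ → ℝ) : Prop :=
  (∃ K, LipschitzOnWith K f (Icc a₀ b₀)) ∧
  (∃ K, LipschitzOnWith K g (Icc a₁ b₁)) ∧
  (∀ x ∈ Icc a₀ b₀, ∫ y in Icc a₁ b₁, max (x * y - f x - g y) 0 ∂μ₁ = ε) ∧
  (∀ y ∈ Icc a₁ b₁, ∫ x in Icc a₀ b₀, max (x * y - f x - g y) 0 ∂μ₀ = ε)

/-- the `x`-section `S_x` of the support of the optimal coupling. -/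
def secX (f g : ℝ → ℝ) (a₁ b₁ x : ℝ) : Set ℝ :=
  {y ∈ Icc a₁ b₁ | 0 ≤ x * y - f x - g y}

/-- the `y`-section `S^y` of the support of the optimal coupling. -/
def secY (f g : ℝ → ℝ) (a₀ b₀ y : ℝ) : Set ℝ :=
  {x ∈ Icc a₀ b₀ | 0 ≤ x * y - f x - g y}

/-- `T_ε(x) = (∫_{S_x} y dμ₁)/μ₁(S_x)`, the derivative `f'` of the potential `f`. -/
def Tmap (μ₁ : Measure ℝ) (f g : ℝ → ℝ) (a₁ b₁ x : ℝ) : ℝ :=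
  (∫ y in secX f g a₁ b₁ x, y ∂μ₁) / (μ₁ (secX f g a₁ b₁ x)).toReal

/-- the symmetric quantity, the derivative `g'` of the potential `g`. -/
def Gmap (μ₀ : Measure ℝ) (f g : ℝ → ℝ) (a₀ b₀ y : ℝ) : ℝ :=
  (∫ x in secY f g a₀ b₀ y, x ∂μ₀) / (μ₀ (secY f g a₀ b₀ y)).toReal

/-- left endpoint `y_m(x)` of `S_x`. -/
def ymF (f g : ℝ → ℝ) (a₁ b₁ x : ℝ) : ℝ := sInf (secX f g a₁ b₁ x)

/-- right endpoint `y_M(x)` of `S_x`. -/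
def yMF (f g : ℝ → ℝ) (a₁ b₁ x : ℝ) : ℝ := sSup (secX f g a₁ b₁ x)

/-- left endpoint `x_m(y)` of `S^y`. -/
def xmF (f g : ℝ → ℝ) (a₀ b₀ y : ℝ) : ℝ := sInf (secY f g a₀ b₀ y)

/-- right endpoint `x_M(y)` of `S^y`. -/
def xMF (f g : ℝ → ℝ) (a₀ b₀ y : ℝ) : ℝ := sSup (secY f g a₀ b₀ y)

/-- `T₀` is the (nondecreasing) Monge map from `μ₀` to `μ₁`. -/
def IsMongeMap (μ₀ μ₁ : Measure ℝ) (T₀ : ℝ → ℝ) : Prop :=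
  Monotone T₀ ∧ Measure.map T₀ μ₀ = μ₁

/-- convex conjugate relative to `[a,b]`. -/
def conjOn (f : ℝ → ℝ) (a b y : ℝ) : ℝ := sSup ((fun x => x * y - f x) '' Icc a b)

section PositivePartIntegrals

variable {α : Type*} [MeasurableSpace α] {μ : Measure α}

theorem measure_setOf_pos_ne_zero_of_integral_max_ne_zero {h : α → ℝ}
    (hint : ∫ x, max (h x) 0 ∂μ ≠ 0) : μ {x | 0 < h x} ≠ 0 := by
  contrapose! hint
  refine integral_eq_zero_of_ae ?_
  filter_upwards [measure_eq_zero_iff_ae_notMem.mp hint] with x hx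
  exact max_eq_right (not_lt.mp hx)

theorem integral_max_sub_lt_of_lt [IsFiniteMeasure μ] {h : α → ℝ} (hh : Integrable h μ)
    {c c' : ℝ} (hcc' : c < c') (hpos : 0 < ∫ x, max (h x - c') 0 ∂μ) :
    ∫ x, max (h x - c') 0 ∂μ < ∫ x, max (h x - c) 0 ∂μ := by
  have hint : ∀ b : ℝ, Integrable (fun x => max (h x - b) 0) μ := fun b =>
    (hh.sub (integrable_const b)).pos_part
  set D := fun x => max (h x - c) 0 - max (h x - c') 0
  have hD : 0 ≤ D := fun x => sub_nonneg.mpr (by gcongr)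
  have hsupp : {x | 0 < h x - c'} ⊆ Function.support D := fun x (hx : 0 < h x - c') => by
    simp only [Function.mem_support, D, max_eq_left hx.le, max_eq_left (by linarith : 0 ≤ h x - c)]
    linarith
  have hDpos : 0 < ∫ x, D x ∂μ :=
    (integral_pos_iff_support_of_nonneg hD ((hint c).sub (hint c'))).mpr <|
      pos_iff_ne_zero.mpr fun h0 => measure_setOf_pos_ne_zero_of_integral_max_ne_zero hpos.ne'
        (measure_mono_null hsupp h0)
  rw [integral_sub (hint c) (hint c')] at hDpos
  linarith

theorem integral_max_convex_comb_le {h₀ h₁ : α → ℝ} (hh₀ : Integrable h₀ μ)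
    (hh₁ : Integrable h₁ μ) {a b : ℝ} (ha : 0 ≤ a) (hb : 0 ≤ b) :
    ∫ x, max (a * h₀ x + b * h₁ x) 0 ∂μ ≤
      a * ∫ x, max (h₀ x) 0 ∂μ + b * ∫ x, max (h₁ x) 0 ∂μ := by
  rw [← integral_const_mul, ← integral_const_mul,
    ← integral_add (hh₀.pos_part.const_mul a) (hh₁.pos_part.const_mul b)]
  refine integral_mono ((hh₀.const_mul a).add (hh₁.const_mul b)).pos_part
    ((hh₀.pos_part.const_mul a).add (hh₁.pos_part.const_mul b)) fun x => max_le ?_ ?_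
  · gcongr <;> exact le_max_left _ _
  · positivity

end PositivePartIntegrals

theorem convexOn_of_forall_setIntegral_max_eq {s t : Set ℝ}
    {μ : Measure ℝ} [IsFiniteMeasure μ] (hs : IsCompact s) (ht : Convex ℝ t) {F g : ℝ → ℝ}
    (hF : ContinuousOn F s) {ε : ℝ} (hε : 0 < ε)
    (hg : ∀ y ∈ t, ∫ x in s, max (x * y - F x - g y) 0 ∂μ = ε) : ConvexOn ℝ t g := by
  refine ⟨ht, fun y₀ hy₀ y₁ hy₁ a b ha hb hab => ?_⟩
  have hint : ∀ y, IntegrableOn (fun x => x * y - F x) s μ := fun y =>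
    ((continuousOn_id.mul continuousOn_const).sub hF).integrableOn_compact hs
  set yt := a • y₀ + b • y₁
  by_contra! hlt
  have hcomb : ∀ x, x * yt - F x - (a • g y₀ + b • g y₁) =
      a * (x * y₀ - F x - g y₀) + b * (x * y₁ - F x - g y₁) := fun x => by
    simp only [yt, smul_eq_mul]
    linear_combination F x * hab
  have hle : ∫ x in s, max (x * yt - F x - (a • g y₀ + b • g y₁)) 0 ∂μ ≤ ε := by
    simp_rw [hcomb]
    refine (integral_max_convex_comb_le (h₀ := fun x => x * y₀ - F x - g y₀)
      (h₁ := fun x => x * y₁ - F x - g y₁) ((hint y₀).sub (integrable_const _))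
      ((hint y₁).sub (integrable_const _)) ha hb).trans_eq ?_
    rw [hg y₀ hy₀, hg y₁ hy₁, ← add_mul, hab, one_mul]
  have hεt := hg yt (ht hy₀ hy₁ ha hb hab)
  have hlt' := integral_max_sub_lt_of_lt (hint yt) hlt (hεt ▸ hε)
  rw [hεt] at hlt'
  exact hle.not_gt hlt'

section SecX

variable {f g : ℝ → ℝ} {a₁ b₁ x : ℝ}

theorem isClosed_secX (hg : ContinuousOn g (Icc a₁ b₁)) : IsClosed (secX f g a₁ b₁ x) :=
  (((continuousOn_const.mul continuousOn_id).sub continuousOn_const).sub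
    hg).preimage_isClosed_of_isClosed isClosed_Icc isClosed_Ici

theorem convex_secX (hg : ConvexOn ℝ (Icc a₁ b₁) g) : Convex ℝ (secX f g a₁ b₁ x) := by
  have hξ : ConcaveOn ℝ (Icc a₁ b₁) fun y => x * y - f x - g y :=
    ((((LinearMap.mul ℝ ℝ x).concaveOn (convex_Icc a₁ b₁)).sub hg).add_const (-f x)).congr
      fun y _ => by simp only [Pi.add_apply, Pi.sub_apply, LinearMap.mul_apply']; ring
  exact hξ.convex_ge 0

theorem secX_eq_Icc (hg : ConvexOn ℝ (Icc a₁ b₁) g) (hgc : ContinuousOn g (Icc a₁ b₁))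
    (hne : (secX f g a₁ b₁ x).Nonempty) :
    secX f g a₁ b₁ x = Icc (ymF f g a₁ b₁ x) (yMF f g a₁ b₁ x) :=
  eq_Icc_of_connected_compact ⟨hne, (convex_secX hg).isPreconnected⟩
    (isCompact_Icc.of_isClosed_subset (isClosed_secX hgc) fun _ hy => hy.1)

theorem measure_secX_ne_zero {μ : Measure ℝ} {ε : ℝ} (hε : ε ≠ 0)
    (h : ∫ y in Icc a₁ b₁, max (x * y - f x - g y) 0 ∂μ = ε) : μ (secX f g a₁ b₁ x) ≠ 0 := by
  have hpos := measure_setOf_pos_ne_zero_of_integral_max_ne_zero (h.symm ▸ hε)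
  rw [Measure.restrict_apply' measurableSet_Icc] at hpos
  refine fun h0 => hpos (measure_mono_null ?_ h0)
  exact fun y hy => ⟨hy.2, hy.1.le⟩

theorem Tmap_eq_setAverage {μ : Measure ℝ} :
    Tmap μ f g a₁ b₁ x = ⨍ y in secX f g a₁ b₁ x, y ∂μ := by
  rw [setAverage_eq, Tmap, smul_eq_mul, div_eq_inv_mul]
  rfl

end SecX

theorem restrict_withDensity_restrict_of_subset {X : Type*} [MeasurableSpace X] {ν : Measure X}
    {s t : Set X} (hs : MeasurableSet s) (hst : s ⊆ t) (d : X → ℝ≥0∞) :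
    ((ν.restrict t).withDensity d).restrict s = (ν.restrict s).withDensity d := by
  rw [restrict_withDensity hs, Measure.restrict_restrict hs, inter_eq_self_of_subset_left hst]

theorem setIntegral_eq_setIntegral_mul_of_restrict_eq_withDensity {X : Type*} [MeasurableSpace X]
    {μ ν : Measure X} {s : Set X} (hs : MeasurableSet s) {u : X → ℝ}
    (hμ : μ.restrict s = (ν.restrict s).withDensity fun y => ENNReal.ofReal (u y))
    (hu : AEMeasurable u (ν.restrict s)) (hu0 : ∀ y ∈ s, 0 ≤ u y) (φ : X → ℝ) :
    ∫ y in s, φ y ∂μ = ∫ y in s, u y * φ y ∂ν := by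
  rw [hμ, integral_withDensity_eq_integral_toReal_smul₀ hu.ennreal_ofReal
    (ae_of_all _ fun _ => ENNReal.ofReal_lt_top)]
  exact setIntegral_congr_fun hs fun y hy => by rw [ENNReal.toReal_ofReal (hu0 y hy), smul_eq_mul]

theorem abs_setIntegral_mul_id_sub_midpoint_le {u : ℝ → ℝ} {p q η c : ℝ} (hpq : p ≤ q)
    (hu : ContinuousOn u (Icc p q)) (hc : ∀ y ∈ Icc p q, |u y - c| ≤ η * u y) :
    |(∫ y in Icc p q, u y * y) - (p + q) / 2 * ∫ y in Icc p q, u y| ≤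
      η / 2 * (q - p) * ∫ y in Icc p q, u y := by
  set m := (p + q) / 2 with hm
  have hint : IntegrableOn u (Icc p q) := hu.integrableOn_Icc
  have hint_id : IntegrableOn (fun y => y - m) (Icc p q) :=
    (continuousOn_id.sub continuousOn_const).integrableOn_Icc
  have hmid : ∫ y in Icc p q, (y - m) = 0 := by
    rw [integral_Icc_eq_integral_Ioc, ← intervalIntegral.integral_of_le hpq,
      intervalIntegral.integral_sub intervalIntegral.intervalIntegrable_id intervalIntegrable_const,
      integral_id, intervalIntegral.integral_const, smul_eq_mul]
    ring
  have hshift : (∫ y in Icc p q, u y * y) - m * ∫ y in Icc p q, u y =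
      ∫ y in Icc p q, (u y - c) * (y - m) :=
    calc (∫ y in Icc p q, u y * y) - m * ∫ y in Icc p q, u y
        = ∫ y in Icc p q, (u y * y - m * u y) := by
          rw [integral_sub (f := fun y => u y * y) (hu.mul continuousOn_id).integrableOn_Icc
            (hint.const_mul m), integral_const_mul]
      _ = ∫ y in Icc p q, ((u y - c) * (y - m) + c * (y - m)) :=
          setIntegral_congr_fun measurableSet_Icc fun y _ => by ring
      _ = ∫ y in Icc p q, (u y - c) * (y - m) := by
          rw [integral_add (f := fun y => (u y - c) * (y - m)) ((hu.sub continuousOn_const).mul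
            (continuousOn_id.sub continuousOn_const)).integrableOn_Icc (hint_id.const_mul c),
            integral_const_mul, hmid, mul_zero, add_zero]
  have hpt : ∀ y ∈ Icc p q, ‖(u y - c) * (y - m)‖ ≤ η * u y * ((q - p) / 2) := fun y hy => by
    rw [norm_mul, Real.norm_eq_abs, Real.norm_eq_abs]
    exact mul_le_mul (hc y hy) (abs_le.mpr ⟨by linarith [hy.1, hm], by linarith [hy.2, hm]⟩)
      (abs_nonneg _) ((abs_nonneg _).trans (hc y hy))
  calc |(∫ y in Icc p q, u y * y) - m * ∫ y in Icc p q, u y|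
      = ‖∫ y in Icc p q, (u y - c) * (y - m)‖ := by rw [hshift, Real.norm_eq_abs]
    _ ≤ ∫ y in Icc p q, η * u y * ((q - p) / 2) :=
        norm_integral_le_of_norm_le ((hint.const_mul η).mul_const _)
          (ae_restrict_of_forall_mem measurableSet_Icc hpt)
    _ = η / 2 * (q - p) * ∫ y in Icc p q, u y := by
        rw [integral_mul_const, integral_const_mul]; ring

theorem abs_setAverage_id_sub_midpoint_le {μ : Measure ℝ} [IsFiniteMeasure μ] {u : ℝ → ℝ}
    {p q η c : ℝ}
    (hμ : μ.restrict (Icc p q) =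
      (volume.restrict (Icc p q)).withDensity fun y => ENNReal.ofReal (u y))
    (hu : ContinuousOn u (Icc p q)) (hu0 : ∀ y ∈ Icc p q, 0 ≤ u y)
    (hc : ∀ y ∈ Icc p q, |u y - c| ≤ η * u y) (h0 : μ (Icc p q) ≠ 0) :
    |⨍ y in Icc p q, y ∂μ - (p + q) / 2| ≤ η / 2 * (q - p) := by
  have hpq : p ≤ q := nonempty_Icc.mp (nonempty_of_measure_ne_zero h0)
  have hdens := setIntegral_eq_setIntegral_mul_of_restrict_eq_withDensity measurableSet_Icc hμ
    (hu.aemeasurable measurableSet_Icc) hu0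
  have hmass : μ.real (Icc p q) = ∫ y in Icc p q, u y := by
    simpa using hdens fun _ => 1
  have hpos : 0 < μ.real (Icc p q) := ENNReal.toReal_pos h0 (measure_ne_top _ _)
  rw [setAverage_eq, smul_eq_mul, hdens, ← div_eq_inv_mul, div_sub' hpos.ne', abs_div,
    abs_of_pos hpos, div_le_iff₀ hpos, hmass, mul_comm _ ((p + q) / 2)]
  exact abs_setIntegral_mul_id_sub_midpoint_le hpq hu hc

theorem stmt7_general
    (a₀ b₀ a₁ b₁ lam Lam : ℝ) (μ₀ μ₁ : Measure ℝ) (u₀ u₁ : ℝ → ℝ)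
    (hlam : 0 < lam)
    (hμ₀ : IsGoodMarginal μ₀ u₀ a₀ b₀ lam Lam)
    (hμ₁ : IsGoodMarginal μ₁ u₁ a₁ b₁ lam Lam)
    (ε : ℝ) (hε : 0 < ε) (f g : ℝ → ℝ)
    (hfg : IsPotentialPair μ₀ μ₁ a₀ b₀ a₁ b₁ ε f g)
    (x : ℝ) (hx : x ∈ Icc a₀ b₀) (η : ℝ) (hη₁ : η < 1)
    (hratio : ∀ y ∈ secX f g a₁ b₁ x, ∀ y' ∈ secX f g a₁ b₁ x,
      (1 - η) * u₁ y' ≤ u₁ y ∧ u₁ y ≤ (1 + η) * u₁ y') :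
    |Tmap μ₁ f g a₁ b₁ x - (ymF f g a₁ b₁ x + yMF f g a₁ b₁ x) / 2| ≤
        η / 2 * (volume (secX f g a₁ b₁ x)).toReal ∧
    (1 - η) / 2 * (volume (secX f g a₁ b₁ x)).toReal ≤
        Tmap μ₁ f g a₁ b₁ x - ymF f g a₁ b₁ x ∧
    (1 - η) / 2 * (volume (secX f g a₁ b₁ x)).toReal ≤
        yMF f g a₁ b₁ x - Tmap μ₁ f g a₁ b₁ x ∧
    Tmap μ₁ f g a₁ b₁ x - ymF f g a₁ b₁ x ≤ (volume (secX f g a₁ b₁ x)).toReal ∧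
    yMF f g a₁ b₁ x - Tmap μ₁ f g a₁ b₁ x ≤ (volume (secX f g a₁ b₁ x)).toReal := by
  obtain ⟨hP₀, -, -, -⟩ := hμ₀
  obtain ⟨hP₁, hμ₁d, hu₁c, hu₁b⟩ := hμ₁
  obtain ⟨⟨_, hfL⟩, ⟨_, hgL⟩, hE₁, hE₀⟩ := hfg
  set ym := ymF f g a₁ b₁ x
  set yM := yMF f g a₁ b₁ x
  have hS0 := measure_secX_ne_zero hε.ne' (hE₁ x hx)
  have hSI : secX f g a₁ b₁ x = Icc ym yM :=
    secX_eq_Icc (convexOn_of_forall_setIntegral_max_eq isCompact_Icc (convex_Icc a₁ b₁)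
      hfL.continuousOn hε hE₀) hgL.continuousOn (nonempty_of_measure_ne_zero hS0)
  have hsub : Icc ym yM ⊆ Icc a₁ b₁ := hSI ▸ fun _ hy => hy.1
  rw [Tmap_eq_setAverage]
  rw [hSI] at hS0 hratio ⊢
  have hpq : ym ≤ yM := nonempty_Icc.mp (nonempty_of_measure_ne_zero hS0)
  have hclose : ∀ y ∈ Icc ym yM, |u₁ y - u₁ ym| ≤ η * u₁ y := fun y hy =>
    have hr := hratio ym (left_mem_Icc.mpr hpq) y hy
    abs_sub_le_iff.mpr ⟨by linarith [hr.1], by linarith [hr.2]⟩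
  have hmid := abs_setAverage_id_sub_midpoint_le
    (hμ₁d ▸ restrict_withDensity_restrict_of_subset measurableSet_Icc hsub _)
    (hu₁c.mono hsub) (fun y hy => hlam.le.trans (hu₁b y (hsub hy)).1) hclose hS0
  rw [Real.volume_Icc, ENNReal.toReal_ofReal (sub_nonneg.2 hpq)]
  obtain ⟨hlow, hhigh⟩ := abs_le.mp hmid
  have hηL : η * (yM - ym) ≤ yM - ym := by nlinarith
  exact ⟨hmid, by linarith, by linarith, by linarith, by linarith⟩

theorem stmt7
    (a₀ b₀ a₁ b₁ lam Lam : ℝ) (μ₀ μ₁ : Measure ℝ) (u₀ u₁ : ℝ → ℝ)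
    (hab₀ : a₀ < b₀) (hab₁ : a₁ < b₁) (hlam : 0 < lam)
    (hμ₀ : IsGoodMarginal μ₀ u₀ a₀ b₀ lam Lam)
    (hμ₁ : IsGoodMarginal μ₁ u₁ a₁ b₁ lam Lam)
    (ε : ℝ) (hε : 0 < ε) (f g : ℝ → ℝ)
    (hfg : IsPotentialPair μ₀ μ₁ a₀ b₀ a₁ b₁ ε f g)
    (x : ℝ) (hx : x ∈ Icc a₀ b₀) (η : ℝ) (hη₀ : 0 < η) (hη₁ : η < 1)
    (hratio : ∀ y ∈ secX f g a₁ b₁ x, ∀ y' ∈ secX f g a₁ b₁ x,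
      (1 - η) * u₁ y' ≤ u₁ y ∧ u₁ y ≤ (1 + η) * u₁ y') :
    |Tmap μ₁ f g a₁ b₁ x - (ymF f g a₁ b₁ x + yMF f g a₁ b₁ x) / 2| ≤
        η / 2 * (volume (secX f g a₁ b₁ x)).toReal ∧
    (1 - η) / 2 * (volume (secX f g a₁ b₁ x)).toReal ≤
        Tmap μ₁ f g a₁ b₁ x - ymF f g a₁ b₁ x ∧
    (1 - η) / 2 * (volume (secX f g a₁ b₁ x)).toReal ≤
        yMF f g a₁ b₁ x - Tmap μ₁ f g a₁ b₁ x ∧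
    Tmap μ₁ f g a₁ b₁ x - ymF f g a₁ b₁ x ≤ (volume (secX f g a₁ b₁ x)).toReal ∧
    yMF f g a₁ b₁ x - Tmap μ₁ f g a₁ b₁ x ≤ (volume (secX f g a₁ b₁ x)).toReal :=
  stmt7_general a₀ b₀ a₁ b₁ lam Lam μ₀ μ₁ u₀ u₁ hlam hμ₀ hμ₁ ε hε f g hfg x hx η hη₁ hratio
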